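/- arXiv:2411.10875 — 2 statements merged into one kernel-verified Lean document; each statement's English description precedes it below -/
import Mathlib

section
/- If f is a chain-recurrent homeomorphism of a compact metric space, then for every positive integer k the iterate f^k is chain-recurrent. -/
/-- `g` is chain-recurrent: every point admits ε-chains back to itself. -/
def ChainRecurrent {X : Type*} [MetricSpace X] (g : X → X) : Prop :=
  ∀ x : X, ∀ ε : ℝ, 0 < ε → ∃ n : ℕ, 1 ≤ n ∧ ∃ c : ℕ → X, c 0 = x ∧ c n = x ∧
    ∀ i < n, dist (g (c i)) (c (i + 1)) < ε

/-- If a homeomorphism of a compact metric space is chain-recurrent, so is every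
positive iterate. -/
theorem stmt_1 {X : Type*} [MetricSpace X] [CompactSpace X] (f : X ≃ₜ X)
    (hf : ChainRecurrent f) (k : ℕ) (hk : 1 ≤ k) :
    ChainRecurrent ((⇑f)^[k]) := by
  intro x ε hε
  have hfc : UniformContinuous (⇑f) :=
    CompactSpace.uniformContinuous_of_continuous f.continuous
  have H : ∀ e : ℝ, 0 < e → ∃ d : ℝ, 0 < d ∧
      ∀ a b : X, dist a b < d → dist (f a) (f b) < e := by
    intro e he
    obtain ⟨d, hd, h⟩ := Metric.uniformContinuous_iff.mp hfc e he
    exact ⟨d, hd, fun a b hab => h hab⟩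
  set D : ℝ → ℝ := fun e => if h : 0 < e then (H e h).choose else 1 with hD
  have hD1 : ∀ e, 0 < D e := by
    intro e; simp only [hD]; split
    · exact (H e ‹_›).choose_spec.1
    · norm_num
  have hD2 : ∀ e, 0 < e → ∀ a b : X, dist a b < D e → dist (f a) (f b) < e := by
    intro e he a b hab
    simp only [hD, dif_pos he] at hab
    exact (H e he).choose_spec.2 a b hab
  set μ : ℕ → ℝ := fun i =>
    Nat.rec (motive := fun _ => ℝ) ε (fun _ m => min (D (m / 2)) (m / 2)) i with hμ
  have hμ0 : μ 0 = ε := rfl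
  have hμs : ∀ i, μ (i + 1) = min (D (μ i / 2)) (μ i / 2) := fun i => rfl
  have hμpos : ∀ i, 0 < μ i := by
    intro i; induction i with
    | zero => exact hε
    | succ i ih => rw [hμs]; exact lt_min (hD1 _) (by linarith)
  have hμhalf : ∀ i, μ (i + 1) ≤ μ i / 2 := fun i => (hμs i) ▸ min_le_right _ _
  have hμuc : ∀ i, ∀ a b : X, dist a b < μ (i + 1) → dist (f a) (f b) < μ i / 2 := by
    intro i a b hab
    have hlt : dist a b < D (μ i / 2) := lt_of_lt_of_le hab ((hμs i) ▸ min_le_left _ _)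
    exact hD2 _ (by have := hμpos i; linarith) a b hlt
  have hμmono : ∀ i j, i ≤ j → μ j ≤ μ i := by
    intro i j hij
    induction j with
    | zero => have : i = 0 := by omega
              simp [this]
    | succ j ih =>
      rcases Nat.lt_or_ge i (j + 1) with h | h
      · have h1 := hμhalf j
        have h2 := hμpos j
        have h3 := ih (by omega)
        linarith
      · have : i = j + 1 := by omega
        simp [this]
  set δ := μ k / 2 with hδdef
  have hδ : 0 < δ := by have := hμpos k; positivity
  obtain ⟨n, hn1, c, hc0, hcn, hc⟩ := hf x δ hδ
  have key : ∀ i : ℕ, dist (f (c (i % n))) (c ((i + 1) % n)) < δ := by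
    intro i
    have hmodd : (i + 1) % n = (i % n + 1) % n := by
      have h := Nat.div_add_mod i n
      calc (i + 1) % n = (n * (i / n) + (i % n + 1)) % n := by rw [← Nat.add_assoc, h]
        _ = (i % n + 1) % n := Nat.mul_add_mod _ _ _
    have hr : i % n < n := Nat.mod_lt _ (by omega)
    rcases Nat.lt_or_ge (i % n + 1) n with h | h
    · rw [hmodd, Nat.mod_eq_of_lt h]
      exact hc _ (by omega)
    · have hin : i % n + 1 = n := by omega
      rw [hmodd, hin, Nat.mod_self, hc0, ← hcn]
      have := hc (i % n) hr
      rwa [hin] at this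
  have claim : ∀ j : ℕ, ∀ i ≤ k,
      dist ((⇑f)^[i] (c (j % n))) (c ((j + i) % n)) < μ (k - i) := by
    intro j i
    induction i with
    | zero => intro _; simpa using hμpos k
    | succ i ih =>
      intro hik
      have IH := ih (by omega)
      have hki : k - i = (k - (i + 1)) + 1 := by omega
      have h1 : dist (f ((⇑f)^[i] (c (j % n)))) (f (c ((j + i) % n)))
          < μ (k - (i + 1)) / 2 := by
        apply hμuc
        rw [← hki]; exact IH
      have h2 := key (j + i)
      have hδle : δ ≤ μ (k - (i + 1)) / 2 := by
        have := hμmono (k - (i + 1)) k (by omega)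
        rw [hδdef]; linarith
      calc dist ((⇑f)^[i + 1] (c (j % n))) (c ((j + (i + 1)) % n))
          = dist (f ((⇑f)^[i] (c (j % n)))) (c ((j + i + 1) % n)) := by
            rw [Function.iterate_succ_apply', ← Nat.add_assoc]
        _ ≤ dist (f ((⇑f)^[i] (c (j % n)))) (f (c ((j + i) % n)))
            + dist (f (c ((j + i) % n))) (c ((j + i + 1) % n)) := dist_triangle _ _ _
        _ < μ (k - (i + 1)) / 2 + μ (k - (i + 1)) / 2 := by
            have := lt_of_lt_of_le h2 hδle
            exact add_lt_add h1 this
        _ = μ (k - (i + 1)) := by ring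
  refine ⟨n, hn1, fun j => c (j * k % n), by simpa using hc0,
    by simpa [Nat.mul_mod_right] using hc0, ?_⟩
  intro j hj
  have hcl := claim (j * k) k le_rfl
  rw [Nat.sub_self, hμ0] at hcl
  simpa [Nat.succ_mul] using hcl
end

section
/- Let f be a homeomorphism of a compact metric space M, Λ a compact f-invariant set, and suppose there is ε > 0 and a continuous map assigning to each x ∈ Λ a 'stable' neighborhood with the property that the open set U = ∪_{x∈Λ} B(x, ε) satisfies: for all y ∈ U, dist(fⁿ(y), fⁿ(π(y))) → 0 uniformly for some π(y) ∈ Λ (uniform contraction toward Λ). Then there exists N ≥ 1 with f^N(closure U) ⊆ U; in particular, if U ≠ M, then f is not chain-recurrent. -/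
/-!
Uniform contraction pushes every point of the closure of `U = thickening ε Λ`, after `N` steps,
into the closed `ε/2`-thickening of `Λ`, which lies inside `U`. A trapping region for `f` itself
(not only for `f^N`) is obtained by spreading `N + 1` nested thickenings of `Λ` along the orbit:
`V = ⋃_{m ≤ N} f^m(thickening r_m Λ)` with `r_0 < r_1 < ⋯ < r_N < ε`. Then `f` maps the closure
of the `m`-th piece into the `(m+1)`-th one, and the last piece back into the first. `V` is
proper because `f^N(V)` lies in `U`.
-/

open Set Metric Function

theorem Homeomorph.coe_pow {X : Type*} [TopologicalSpace X] (f : X ≃ₜ X) (n : ℕ) :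
    ⇑(f ^ n) = (⇑f)^[n] := by
  induction n with
  | zero => rfl
  | succ n ih => rw [pow_succ, iterate_succ, ← ih]; rfl

section Trapping

variable {X : Type*} [TopologicalSpace X] (f : X ≃ₜ X)

theorem Homeomorph.isOpen_biUnion_image_iterate {W : ℕ → Set X} (hW : ∀ m, IsOpen (W m))
    (L : ℕ) : IsOpen (⋃ m ≤ L, (⇑f)^[m] '' W m) :=
  isOpen_biUnion fun m _ => f.coe_pow m ▸ (f ^ m).isOpenMap _ (hW m)

theorem Homeomorph.image_closure_biUnion_image_iterate_subset (W : ℕ → Set X) (L : ℕ)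
    (hnest : ∀ m < L, closure (W m) ⊆ W (m + 1))
    (hreturn : (⇑f)^[L + 1] '' closure (W L) ⊆ W 0) :
    f '' closure (⋃ m ≤ L, (⇑f)^[m] '' W m) ⊆ ⋃ m ≤ L, (⇑f)^[m] '' W m := by
  rw [closure_iUnion₂_le_nat, image_iUnion₂]
  refine iUnion₂_subset fun m hm => ?_
  rw [← f.coe_pow, ← Homeomorph.image_closure, f.coe_pow, ← image_comp, ← iterate_succ']
  rcases hm.lt_or_eq with hlt | rfl
  · exact (image_mono (hnest m hlt)).trans
      (subset_biUnion_of_mem (u := fun k => (⇑f)^[k] '' W k) (Nat.succ_le_of_lt hlt))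
  · exact hreturn.trans fun x hx => mem_iUnion₂.2 ⟨0, Nat.zero_le m, x, hx, rfl⟩

end Trapping

theorem biUnion_image_iterate_ne_univ {α : Type*} {f : α → α} (hf : Surjective f)
    {W : ℕ → Set α} {U : Set α} {L N : ℕ} (hW : ∀ m ≤ L, f^[N + m] '' W m ⊆ U)
    (hU : U ≠ univ) : ⋃ m ≤ L, f^[m] '' W m ≠ univ := by
  intro h
  refine hU (eq_univ_of_univ_subset ?_)
  rw [← (hf.iterate N).range_eq, ← image_univ, ← h, image_iUnion₂]
  refine iUnion₂_subset fun m hm => ?_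
  rw [← image_comp, ← iterate_add]
  exact hW m hm

section Metric

variable {X : Type*} [PseudoMetricSpace X]

theorem image_iterate_closure_subset_cthickening {g : X → X} (hg : Continuous g)
    {Λ U : Set X} (hΛ : MapsTo g Λ Λ) {π : X → X} (hπ : ∀ y ∈ U, π y ∈ Λ) {δ : ℝ} {n : ℕ}
    (hn : ∀ y ∈ U, dist (g^[n] y) (g^[n] (π y)) < δ) :
    g^[n] '' closure U ⊆ cthickening δ Λ := by
  refine (image_closure_subset_closure_image (hg.iterate n)).trans
    (closure_minimal ?_ isClosed_cthickening)
  rintro _ ⟨y, hy, rfl⟩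
  exact thickening_subset_cthickening _ _
    (mem_thickening_iff.2 ⟨_, hΛ.iterate n (hπ y hy), hn y hy⟩)

theorem exists_trapping_region_of_image_iterate_subset_cthickening {f : X ≃ₜ X} {Λ : Set X}
    (hΛ : Λ.Nonempty) {δ ε : ℝ} (hδ : 0 ≤ δ) (hδε : δ < ε) {N : ℕ}
    (hN : ∀ n ≥ N, (⇑f)^[n] '' closure (thickening ε Λ) ⊆ cthickening δ Λ)
    (hU : thickening ε Λ ≠ univ) :
    ∃ V : Set X, IsOpen V ∧ V.Nonempty ∧ V ≠ univ ∧ f '' closure V ⊆ V := by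
  set r : ℕ → ℝ := fun m => ε - (ε - δ) / (m + 2) with hr
  have hgap : 0 < ε - δ := sub_pos.2 hδε
  have hr_lt : ∀ m, r m < ε := fun m => by
    have : 0 < (ε - δ) / (m + 2) := by positivity
    simp only [hr]; linarith
  have hδr : ∀ m, δ < r m := fun m => by
    have : (ε - δ) / (m + 2) < ε - δ := div_lt_self hgap (by linarith [m.cast_nonneg (α := ℝ)])
    simp only [hr]; linarith
  have hr_succ : ∀ m, r m < r (m + 1) := fun m => by
    have : (ε - δ) / ((m + 1 : ℕ) + 2) < (ε - δ) / (m + 2) :=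
      div_lt_div_of_pos_left hgap (by positivity) (by push_cast; linarith)
    simp only [hr]; linarith
  have hcth : ∀ m, cthickening δ Λ ⊆ thickening (r m) Λ := fun m =>
    cthickening_subset_thickening' (hδ.trans_lt (hδr m)) (hδr m) Λ
  refine ⟨⋃ m ≤ N, (⇑f)^[m] '' thickening (r m) Λ,
    f.isOpen_biUnion_image_iterate (fun _ => isOpen_thickening) N, ?_, ?_, ?_⟩
  · obtain ⟨x, hx⟩ := hΛ
    exact ⟨x, mem_iUnion₂.2 ⟨0, Nat.zero_le N, x, hcth 0 (self_subset_cthickening Λ hx), rfl⟩⟩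
  · refine biUnion_image_iterate_ne_univ f.surjective (N := N) (fun m _ => ?_) hU
    calc (⇑f)^[N + m] '' thickening (r m) Λ
        ⊆ (⇑f)^[N + m] '' closure (thickening ε Λ) :=
          image_mono ((thickening_mono (hr_lt m).le Λ).trans subset_closure)
      _ ⊆ cthickening δ Λ := hN _ (N.le_add_right m)
      _ ⊆ thickening ε Λ := cthickening_subset_thickening' (hδ.trans_lt hδε) hδε Λ
  · refine f.image_closure_biUnion_image_iterate_subset _ N (fun m _ => ?_) ?_
    · exact (closure_thickening_subset_cthickening _ Λ).trans
        (cthickening_subset_thickening' ((hδ.trans_lt (hδr m)).trans (hr_succ m)) (hr_succ m) Λ)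
    · exact (image_mono (closure_mono (thickening_mono (hr_lt N).le Λ))).trans
        ((hN _ N.le_succ).trans (hcth 0))

end Metric

theorem stmt_17_general {M : Type*} [MetricSpace M] (f : M ≃ₜ M)
    (Λ : Set M) (hΛne : Λ.Nonempty) (hΛinv : f '' Λ = Λ)
    (ε : ℝ) (hε : 0 < ε) (π : M → M)
    (hπ : ∀ y ∈ {y : M | ∃ x ∈ Λ, dist y x < ε}, π y ∈ Λ)
    (hcontr : ∀ δ : ℝ, 0 < δ → ∃ N : ℕ, ∀ n ≥ N,
      ∀ y ∈ {y : M | ∃ x ∈ Λ, dist y x < ε},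
        dist ((⇑f)^[n] y) ((⇑f)^[n] (π y)) < δ) :
    (∃ N : ℕ, 1 ≤ N ∧
      (⇑f)^[N] '' closure {y : M | ∃ x ∈ Λ, dist y x < ε} ⊆
        {y : M | ∃ x ∈ Λ, dist y x < ε}) ∧
    ({y : M | ∃ x ∈ Λ, dist y x < ε} ≠ Set.univ →
      ∃ V : Set M, IsOpen V ∧ V.Nonempty ∧ V ≠ Set.univ ∧ f '' closure V ⊆ V) := by
  have hU : {y : M | ∃ x ∈ Λ, dist y x < ε} = thickening ε Λ := by
    ext; exact mem_thickening_iff.symm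
  rw [hU] at hπ hcontr ⊢
  obtain ⟨N, hN⟩ := hcontr (ε / 2) (half_pos hε)
  have hmaps : MapsTo f Λ Λ := by simpa only [hΛinv] using mapsTo_image f Λ
  have hcl : ∀ n ≥ N, (⇑f)^[n] '' closure (thickening ε Λ) ⊆ cthickening (ε / 2) Λ :=
    fun n hn => image_iterate_closure_subset_cthickening f.continuous hmaps hπ (hN n hn)
  exact ⟨⟨N + 1, Nat.le_add_left 1 N,
      (hcl _ N.le_succ).trans (cthickening_subset_thickening' hε (half_lt_self hε) Λ)⟩,
    exists_trapping_region_of_image_iterate_subset_cthickening hΛne (half_pos hε).le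
      (half_lt_self hε) hcl⟩

/-- If the `ε`-neighborhood `U` of a compact invariant set `Λ` is uniformly
contracted toward `Λ` under iteration, then some iterate of `f` sends the closure
of `U` inside `U`; in particular, if `U ≠ M` then `f` has a nonempty proper open
trapping region, i.e. `f` is not chain-recurrent. -/
theorem stmt_17 {M : Type*} [MetricSpace M] [CompactSpace M] (f : M ≃ₜ M)
    (Λ : Set M) (hΛc : IsCompact Λ) (hΛne : Λ.Nonempty) (hΛinv : f '' Λ = Λ)
    (ε : ℝ) (hε : 0 < ε) (π : M → M)
    (hπ : ∀ y ∈ {y : M | ∃ x ∈ Λ, dist y x < ε}, π y ∈ Λ)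
    (hcontr : ∀ δ : ℝ, 0 < δ → ∃ N : ℕ, ∀ n ≥ N,
      ∀ y ∈ {y : M | ∃ x ∈ Λ, dist y x < ε},
        dist ((⇑f)^[n] y) ((⇑f)^[n] (π y)) < δ) :
    (∃ N : ℕ, 1 ≤ N ∧
      (⇑f)^[N] '' closure {y : M | ∃ x ∈ Λ, dist y x < ε} ⊆
        {y : M | ∃ x ∈ Λ, dist y x < ε}) ∧
    ({y : M | ∃ x ∈ Λ, dist y x < ε} ≠ Set.univ →
      ∃ V : Set M, IsOpen V ∧ V.Nonempty ∧ V ≠ Set.univ ∧ f '' closure V ⊆ V) :=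
  stmt_17_general f Λ hΛne hΛinv ε hε π hπ hcontr
end
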